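/- arXiv:0812.0271 — 3 statements merged into one kernel-verified Lean document; each statement's English description precedes it below -/
import Mathlib

section
/- Let t ≥ 1 be a natural number, let E be a set of prime numbers containing all but finitely many primes, and let f : E → ℕ be any function. Then every natural number d which divides (p^t − 1)·p^{f(p)} for every prime p ∈ E divides N_t. (Equivalently, the gcd of the family {(p^t − 1)·p^{f(p)}}_{p ∈ E} divides N_t.) -/
/-- For `t ∈ ℕ`: `N 0 = 0`; `N t = 2` for odd `t`;
`N t = 2 * ∏_{p prime, (p-1) ∣ t} p^(v_p(t)+1)` for even positive `t`.
(Any prime `p` with `(p-1) ∣ t` satisfies `p ≤ t + 1 < t + 2`.) -/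
def Npaper (t : ℕ) : ℕ :=
  if t = 0 then 0
  else if t % 2 = 1 then 2
  else 2 * ∏ p ∈ Finset.filter (fun p => p.Prime ∧ (p - 1) ∣ t) (Finset.range (t + 2)),
      p ^ (t.factorization p + 1)

/-!
Every unit of `ZMod n` is the residue of a prime of `E` (Dirichlet), so if `n` divides all
`(p^t - 1) * p^(f p)`, then every unit `u` satisfies `u ^ t = 1`, i.e. the Carmichael function
`λ n` divides `t`. The values `λ(q^k) = q^(k-1) (q-1)` for odd `q`,
`λ 4 = 2` and `λ(2^k) = 2^(k-2)` for `k ≥ 3` then show that `N t` is divisible by every `n`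
with `λ n ∣ t`.
-/

open ArithmeticFunction

lemma Npaper_zero : Npaper 0 = 0 := rfl

lemma Npaper_of_odd {t : ℕ} (ht : Odd t) : Npaper t = 2 := by
  simp [Npaper, ht.pos.ne', Nat.odd_iff.1 ht]

lemma two_mul_pow_dvd_Npaper {t q : ℕ} (ht : t ≠ 0) (heven : Even t) (hq : q.Prime)
    (hqt : q - 1 ∣ t) : 2 * q ^ (t.factorization q + 1) ∣ Npaper t := by
  have hmem : q ∈ Finset.filter (fun p => p.Prime ∧ (p - 1) ∣ t) (Finset.range (t + 2)) := by
    have hle := Nat.le_of_dvd (Nat.pos_of_ne_zero ht) hqt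
    simp only [Finset.mem_filter, Finset.mem_range]
    exact ⟨by omega, hq, hqt⟩
  simp only [Npaper, ht, Nat.even_iff.1 heven, if_false]
  exact mul_dvd_mul_left 2 (Finset.dvd_prod_of_mem _ hmem)

lemma pow_dvd_Npaper_of_carmichael_dvd {t q k : ℕ} (hq : q.Prime) (hq2 : q ≠ 2) (ht : t ≠ 0)
    (h : carmichael (q ^ k) ∣ t) : q ^ k ∣ Npaper t := by
  rcases Nat.eq_zero_or_pos k with rfl | hk
  · simp
  rw [carmichael_pow_of_prime_ne_two k hq hq2, Nat.totient_prime_pow hq hk] at h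
  have hqt : q - 1 ∣ t := dvd_of_mul_left_dvd h
  have heven : Even t := even_iff_two_dvd.2 ((hq.even_sub_one hq2).two_dvd.trans hqt)
  have hkt : k - 1 ≤ t.factorization q :=
    (hq.pow_dvd_iff_le_factorization ht).1 (dvd_of_mul_right_dvd h)
  calc q ^ k ∣ q ^ (t.factorization q + 1) := pow_dvd_pow q (by omega)
    _ ∣ 2 * q ^ (t.factorization q + 1) := dvd_mul_left _ _
    _ ∣ Npaper t := two_mul_pow_dvd_Npaper ht heven hq hqt

lemma two_pow_sub_two_dvd_carmichael (k : ℕ) : 2 ^ (k - 2) ∣ carmichael (2 ^ k) := by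
  obtain rfl | hk := eq_or_ne k 2
  · simp
  · rw [carmichael_two_pow_of_ne_two hk]

lemma two_pow_dvd_Npaper_of_carmichael_dvd {t k : ℕ} (ht : t ≠ 0)
    (h : carmichael (2 ^ k) ∣ t) : 2 ^ k ∣ Npaper t := by
  rcases Nat.even_or_odd t with heven | hodd
  · have hkt : k - 2 ≤ t.factorization 2 :=
      (Nat.prime_two.pow_dvd_iff_le_factorization ht).1
        ((two_pow_sub_two_dvd_carmichael k).trans h)
    calc 2 ^ k ∣ 2 ^ (t.factorization 2 + 1 + 1) := pow_dvd_pow 2 (by omega)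
      _ = 2 * 2 ^ (t.factorization 2 + 1) := pow_succ' _ _
      _ ∣ Npaper t := two_mul_pow_dvd_Npaper ht heven Nat.prime_two (by simp)
  · have hk : k ≤ 1 := by
      by_contra! hk
      have h4 : carmichael (2 ^ 2) ∣ t := (carmichael_dvd (pow_dvd_pow 2 hk)).trans h
      rw [carmichael_two_pow_of_le_two le_rfl] at h4
      exact hodd.not_two_dvd_nat h4
    rw [Npaper_of_odd hodd]
    exact (pow_dvd_pow 2 hk).trans (pow_one 2).dvd

lemma dvd_Npaper_of_carmichael_dvd {n t : ℕ} (h : carmichael n ∣ t) : n ∣ Npaper t := by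
  obtain rfl | ht := eq_or_ne t 0
  · simp [Npaper_zero]
  refine (Nat.dvd_iff_prime_pow_dvd_dvd _ _).2 fun q k hq hqk => ?_
  have hqk_t := (carmichael_dvd hqk).trans h
  obtain rfl | hq2 := eq_or_ne q 2
  · exact two_pow_dvd_Npaper_of_carmichael_dvd ht hqk_t
  · exact pow_dvd_Npaper_of_carmichael_dvd hq hq2 ht hqk_t

lemma exists_prime_mem_natCast_eq {E : Set ℕ} (hE : {p : ℕ | p.Prime ∧ p ∉ E}.Finite)
    {n : ℕ} [NeZero n] {a : ZMod n} (ha : IsUnit a) :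
    ∃ p ∈ E, p.Prime ∧ (p : ZMod n) = a := by
  obtain ⟨p, ⟨hp, hpa⟩, hpE⟩ := ((Nat.infinite_setOfPred_prime_and_eq_mod ha).sdiff hE).nonempty
  exact ⟨p, by_contra fun hpE' => hpE ⟨hp, hpE'⟩, hp, hpa⟩

lemma carmichael_dvd_of_forall_dvd_pow_sub_one_mul {E : Set ℕ}
    (hE : {p : ℕ | p.Prime ∧ p ∉ E}.Finite) {f : ℕ → ℕ} {n t : ℕ} [NeZero n]
    (hn : ∀ p ∈ E, n ∣ (p ^ t - 1) * p ^ f p) : carmichael n ∣ t := by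
  rw [carmichael_eq_exponent']
  refine Monoid.exponent_dvd_of_forall_pow_eq_one fun u => ?_
  obtain ⟨p, hpE, hp, hpu⟩ := exists_prime_mem_natCast_eq hE u.isUnit
  have hcop : n.Coprime p := ((ZMod.isUnit_iff_coprime p n).1 (hpu ▸ u.isUnit)).symm
  have hdvd : n ∣ p ^ t - 1 := (hcop.pow_right _).dvd_of_dvd_mul_right (hn p hpE)
  have hmod : 1 ≡ p ^ t [MOD n] := (Nat.modEq_iff_dvd' (Nat.one_le_pow _ _ hp.pos)).2 hdvd
  ext
  simpa [← hpu] using ((ZMod.natCast_eq_natCast_iff _ _ _).2 hmod).symm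

theorem stmt_0_general (t : ℕ) (E : Set ℕ)
    (hcofin : {p : ℕ | Nat.Prime p ∧ p ∉ E}.Finite)
    (f : ℕ → ℕ) (d : ℕ)
    (hd : ∀ p ∈ E, d ∣ (p ^ t - 1) * p ^ (f p)) :
    d ∣ Npaper t :=
  (Nat.dvd_iff_prime_pow_dvd_dvd _ _).2 fun q k hq hqk =>
    have : NeZero (q ^ k) := ⟨pow_ne_zero k hq.ne_zero⟩
    dvd_Npaper_of_carmichael_dvd <|
      carmichael_dvd_of_forall_dvd_pow_sub_one_mul hcofin fun p hp => hqk.trans (hd p hp)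

/-- Lemma 3.2 of the paper (a variant of a result of Adams): if `E` is a set of primes
containing all but finitely many primes, `f : E → ℕ` any function, `t ≥ 1`, and `d`
divides `(p^t - 1) * p^(f p)` for every `p ∈ E`, then `d ∣ N t`. -/
theorem stmt_0 (t : ℕ) (ht : 1 ≤ t) (E : Set ℕ)
    (hEprime : ∀ p ∈ E, Nat.Prime p)
    (hcofin : {p : ℕ | Nat.Prime p ∧ p ∉ E}.Finite)
    (f : ℕ → ℕ) (d : ℕ)
    (hd : ∀ p ∈ E, d ∣ (p ^ t - 1) * p ^ (f p)) :
    d ∣ Npaper t :=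
  stmt_0_general t E hcofin f d hd
end

section
/- Let t ≥ 1 and c ≥ 1 be natural numbers. If c divides p^t − 1 for all but finitely many prime numbers p, then the exponent of the unit group (ℤ/cℤ)^× divides t. -/
theorem ZMod.exists_prime_notMem_natCast_eq {c : ℕ} [NeZero c] (u : (ZMod c)ˣ) {S : Set ℕ}
    (hS : S.Finite) : ∃ p, p.Prime ∧ p ∉ S ∧ (p : ZMod c) = u := by
  obtain ⟨p, ⟨hp, hpu⟩, hpS⟩ :=
    ((Nat.infinite_setOfPred_prime_and_eq_mod u.isUnit).sdiff hS).nonempty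
  exact ⟨p, hp, hpS, hpu⟩

theorem ZMod.natCast_pow_eq_one_of_dvd_pow_sub_one {c p t : ℕ} (hp : p ≠ 0)
    (h : c ∣ p ^ t - 1) : (p : ZMod c) ^ t = 1 := by
  have hmod : 1 ≡ p ^ t [MOD c] := (Nat.modEq_iff_dvd' (Nat.one_le_pow _ _ hp.bot_lt)).mpr h
  exact_mod_cast ((ZMod.natCast_eq_natCast_iff _ _ _).mpr hmod).symm

theorem stmt_2_general (t c : ℕ) (hc : 1 ≤ c)
    (h : {p : ℕ | Nat.Prime p ∧ ¬ c ∣ p ^ t - 1}.Finite) :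
    Monoid.exponent (ZMod c)ˣ ∣ t := by
  have : NeZero c := ⟨by omega⟩
  refine Monoid.exponent_dvd_of_forall_pow_eq_one fun u => Units.ext ?_
  obtain ⟨p, hp, hpS, hpu⟩ := ZMod.exists_prime_notMem_natCast_eq u h
  have hdvd : c ∣ p ^ t - 1 := by_contra fun hndvd => hpS ⟨hp, hndvd⟩
  rw [Units.val_pow_eq_pow_val, ← hpu]
  exact ZMod.natCast_pow_eq_one_of_dvd_pow_sub_one hp.ne_zero hdvd

/-- If `c` divides `p^t - 1` for all but finitely many primes `p`, then the exponent
of `(ℤ/cℤ)ˣ` divides `t`. -/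
theorem stmt_2 (t c : ℕ) (ht : 1 ≤ t) (hc : 1 ≤ c)
    (h : {p : ℕ | Nat.Prime p ∧ ¬ c ∣ p ^ t - 1}.Finite) :
    Monoid.exponent (ZMod c)ˣ ∣ t :=
  stmt_2_general t c hc h
end

section
/- Let G be a group, let V be a finite-dimensional vector space over ℂ, and let ρ : G → GL(V) be a linear representation. Let g ∈ G and let n ≥ 1 with g^n = 1, and let k be a natural number coprime to n. Let f : ℂ → ℂ be any ring homomorphism such that f(z) = z^k for every z ∈ ℂ with z^n = 1. Then f(trace ρ(g)) = trace ρ(g^k). -/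
/-!
Over `ℂ` the trace of every power `T ^ m` is `∑ μ ^ m`, the sum running over the roots `μ` of
the characteristic polynomial of `T` with multiplicity: on the generalized eigenspace of `μ`,
`T` is `μ` plus a commuting nilpotent, which does not change traces. For `T = ρ g` every such
`μ` is an eigenvalue with `μ ^ n = 1`, so applying `f` to `∑ μ` gives `∑ μ ^ k`, the trace
of `ρ (g ^ k)`.
-/

open Module Set Polynomial

namespace Module.End

theorem HasEigenvalue.pow_eq_one {R M : Type*} [CommRing R] [IsDomain R] [AddCommGroup M]
    [Module R M] [IsTorsionFree R M] {f : End R M} {μ : R} (hμ : f.HasEigenvalue μ) {n : ℕ}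
    (hf : f ^ n = 1) : μ ^ n = 1 := by
  obtain ⟨v, hv⟩ := hμ.exists_hasEigenvector
  have h := hv.pow_apply n
  rw [hf, one_apply] at h
  exact smul_left_injective R hv.2 (by simpa using h.symm)

theorem trace_pow_of_isNilpotent_sub_algebraMap {R M : Type*} [CommRing R] [IsReduced R]
    [AddCommGroup M] [Module R M] [Module.Free R M] [Module.Finite R M] {g : End R M} {μ : R}
    (hg : IsNilpotent (g - algebraMap R _ μ)) (m : ℕ) :
    LinearMap.trace R M (g ^ m) = μ ^ m * finrank R M := by
  induction m with
  | zero => simp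
  | succ m ih =>
    rw [pow_succ, mul_eq_comp, LinearMap.trace_comp_eq_mul_of_commute_of_isNilpotent μ
      ((Commute.refl g).pow_left m) hg, ih, pow_succ]
    ring

variable {K V : Type*} [Field K] [AddCommGroup V] [Module K V] [FiniteDimensional K V]

theorem trace_restrict_maxGenEigenspace_pow (f : End K V) (μ : K) (m : ℕ) :
    LinearMap.trace K _ ((f ^ m).restrict
      (f.mapsTo_maxGenEigenspace_of_comm ((Commute.refl f).pow_right m) μ)) =
      μ ^ m * finrank K (f.maxGenEigenspace μ) := by
  have hf := f.mapsTo_maxGenEigenspace_of_comm (Commute.refl f) μ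
  have hnil : IsNilpotent (f.restrict hf - algebraMap K _ μ) :=
    f.isNilpotent_restrict_maxGenEigenspace_sub_algebraMap μ
  rw [← pow_restrict m hf, trace_pow_of_isNilpotent_sub_algebraMap hnil]

theorem trace_pow_eq_sum_roots_charpoly [IsAlgClosed K] (f : End K V) (m : ℕ) :
    LinearMap.trace K V (f ^ m) = (f.charpoly.roots.map (· ^ m)).sum := by
  classical
  have hds := DirectSum.isInternal_submodule_of_iSupIndep_of_iSup_eq_top
    f.independent_maxGenEigenspace f.iSup_maxGenEigenspace_eq_top
  have hfin := WellFoundedGT.finite_ne_bot_of_iSupIndep f.independent_maxGenEigenspace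
  have hsupp : hfin.toFinset = f.charpoly.roots.toFinset := by
    ext μ
    simp only [Finite.mem_toFinset, mem_ofPred_eq, Multiset.mem_toFinset, ← Multiset.count_pos,
      count_roots, ← LinearMap.finrank_maxGenEigenspace_eq, Nat.pos_iff_ne_zero, Ne,
      Submodule.finrank_eq_zero]
  rw [LinearMap.trace_eq_sum_trace_restrict' hds hfin
    (fun μ ↦ f.mapsTo_maxGenEigenspace_of_comm ((Commute.refl f).pow_right m) μ),
    Finset.sum_multiset_map_count, hsupp]
  refine Finset.sum_congr rfl fun μ _ ↦ ?_
  rw [trace_restrict_maxGenEigenspace_pow, LinearMap.finrank_maxGenEigenspace_eq, count_roots,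
    nsmul_eq_mul, mul_comm]

end Module.End

theorem stmt_8_general {G : Type*} [Group G]
    {V : Type*} [AddCommGroup V] [Module ℂ V] [FiniteDimensional ℂ V]
    (ρ : Representation ℂ G V) (g : G) (n : ℕ) (hg : g ^ n = 1)
    (k : ℕ)
    (f : ℂ →+* ℂ) (hf : ∀ z : ℂ, z ^ n = 1 → f z = z ^ k) :
    f (LinearMap.trace ℂ V (ρ g)) = LinearMap.trace ℂ V (ρ (g ^ k)) := by
  have hroot : ∀ μ ∈ (ρ g).charpoly.roots, μ ^ n = 1 := fun μ hμ ↦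
    Module.End.HasEigenvalue.pow_eq_one
      ((Module.End.hasEigenvalue_iff_isRoot_charpoly _ μ).mpr (isRoot_of_mem_roots hμ))
      (by rw [← map_pow, hg, map_one])
  rw [map_pow, Module.End.trace_pow_eq_sum_roots_charpoly,
    Module.End.trace_eq_sum_roots_charpoly_of_splits (IsAlgClosed.splits _), map_multiset_sum]
  exact congrArg Multiset.sum (Multiset.map_congr rfl fun μ hμ ↦ hf μ (hroot μ hμ))

/-- Galois equivariance of characters: if `g^n = 1`, `k` is coprime to `n`, and
`f : ℂ →+* ℂ` sends every `n`-th root of unity `z` to `z^k`, then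
`f (Tr ρ(g)) = Tr ρ(g^k)`. -/
theorem stmt_8 {G : Type*} [Group G]
    {V : Type*} [AddCommGroup V] [Module ℂ V] [FiniteDimensional ℂ V]
    (ρ : Representation ℂ G V) (g : G) (n : ℕ) (hn : 1 ≤ n) (hg : g ^ n = 1)
    (k : ℕ) (hk : Nat.Coprime k n)
    (f : ℂ →+* ℂ) (hf : ∀ z : ℂ, z ^ n = 1 → f z = z ^ k) :
    f (LinearMap.trace ℂ V (ρ g)) = LinearMap.trace ℂ V (ρ (g ^ k)) :=
  stmt_8_general ρ g n hg k f hf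
end
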